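/- arXiv:2303.12778 — 2 statements merged into one kernel-verified Lean document; each statement's English description precedes it below -/
import Mathlib

section
/- For every κ ∈ (0,1), (2-κ²)E(κ) - 2(1-κ²)K(κ) > 0, where K and E are the complete elliptic integrals of the first and second kind. -/
open Real

/-- Complete elliptic integral of the first kind. -/
noncomputable def ellipticK (k : ℝ) : ℝ :=
  ∫ θ in (0:ℝ)..(π/2), 1 / Real.sqrt (1 - k^2 * (Real.sin θ)^2)

/-- Complete elliptic integral of the second kind. -/
noncomputable def ellipticE (k : ℝ) : ℝ :=
  ∫ θ in (0:ℝ)..(π/2), Real.sqrt (1 - k^2 * (Real.sin θ)^2)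

/-!
With `Δ(θ) = √(1 - k² sin²θ)`, integrate by parts: `k² sin θ cos θ Δ(θ)` vanishes at `0` and `π/2`, and its
derivative is `(2 - k²)Δ - 2(1 - k²)/Δ - 3k⁴ sin²θ cos²θ/Δ`. Hence `(2 - k²)E - 2(1 - k²)K` equals
`∫₀^{π/2} 3k⁴ sin²θ cos²θ / Δ(θ) dθ`, whose integrand is positive on `(0, π/2)`.
-/

noncomputable def ellipticDelta (k θ : ℝ) : ℝ :=
  √(1 - k ^ 2 * sin θ ^ 2)

section
variable {k : ℝ}

theorem one_sub_sq_mul_sin_sq_pos (hk : k ^ 2 < 1) (θ : ℝ) : 0 < 1 - k ^ 2 * sin θ ^ 2 := by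
  nlinarith [sin_sq_le_one θ, sq_nonneg (sin θ)]

theorem ellipticDelta_pos (hk : k ^ 2 < 1) (θ : ℝ) : 0 < ellipticDelta k θ :=
  sqrt_pos.mpr (one_sub_sq_mul_sin_sq_pos hk θ)

theorem sq_ellipticDelta (hk : k ^ 2 < 1) (θ : ℝ) :
    ellipticDelta k θ ^ 2 = 1 - k ^ 2 * sin θ ^ 2 :=
  sq_sqrt (one_sub_sq_mul_sin_sq_pos hk θ).le

theorem continuous_ellipticDelta (k : ℝ) : Continuous (ellipticDelta k) := by
  unfold ellipticDelta; fun_prop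

theorem Continuous.div_ellipticDelta {f : ℝ → ℝ} (hf : Continuous f) (hk : k ^ 2 < 1) :
    Continuous fun θ => f θ / ellipticDelta k θ :=
  hf.div (continuous_ellipticDelta k) fun θ => (ellipticDelta_pos hk θ).ne'

theorem hasDerivAt_ellipticDelta (hk : k ^ 2 < 1) (θ : ℝ) :
    HasDerivAt (ellipticDelta k) (-(k ^ 2 * sin θ * cos θ) / ellipticDelta k θ) θ := by
  have hu : HasDerivAt (fun θ => 1 - k ^ 2 * sin θ ^ 2) (-(k ^ 2 * (2 * sin θ * cos θ))) θ := by
    simpa using ((hasDerivAt_sin θ).pow 2 |>.const_mul (k ^ 2)).const_sub 1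
  refine (hu.sqrt (one_sub_sq_mul_sin_sq_pos hk θ).ne').congr_deriv ?_
  have hΔ := ellipticDelta_pos hk θ
  unfold ellipticDelta at *
  field_simp

theorem hasDerivAt_sin_mul_cos_mul_ellipticDelta (hk : k ^ 2 < 1) (θ : ℝ) :
    HasDerivAt (fun θ => k ^ 2 * sin θ * cos θ * ellipticDelta k θ)
      ((2 - k ^ 2) * ellipticDelta k θ - 2 * (1 - k ^ 2) * (1 / ellipticDelta k θ)
        - 3 * k ^ 4 * sin θ ^ 2 * cos θ ^ 2 / ellipticDelta k θ) θ := by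
  have hΔ := ellipticDelta_pos hk θ
  refine ((((hasDerivAt_sin θ).const_mul (k ^ 2)).fun_mul (hasDerivAt_cos θ)).fun_mul
    (hasDerivAt_ellipticDelta hk θ)).congr_deriv ?_
  field_simp
  linear_combination (-(2 - k ^ 2) + k ^ 2 * (cos θ ^ 2 - sin θ ^ 2)) * sq_ellipticDelta hk θ
    + (k ^ 2 + k ^ 4 * sin θ ^ 2) * sin_sq_add_cos_sq θ

theorem ellipticE_mul_sub_ellipticK_mul_eq_integral (hk : k ^ 2 < 1) :
    (2 - k ^ 2) * ellipticE k - 2 * (1 - k ^ 2) * ellipticK k =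
      ∫ θ in (0)..(π / 2), 3 * k ^ 4 * sin θ ^ 2 * cos θ ^ 2 / ellipticDelta k θ := by
  have hΔ : Continuous (ellipticDelta k) := continuous_ellipticDelta k
  have hΔ_inv : Continuous fun θ => 1 / ellipticDelta k θ := continuous_const.div_ellipticDelta hk
  have hrest : Continuous fun θ => 3 * k ^ 4 * sin θ ^ 2 * cos θ ^ 2 / ellipticDelta k θ :=
    (by fun_prop : Continuous fun θ => 3 * k ^ 4 * sin θ ^ 2 * cos θ ^ 2).div_ellipticDelta hk
  have hFTC := intervalIntegral.integral_eq_sub_of_hasDerivAt (a := 0) (b := π / 2)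
    (fun θ _ => hasDerivAt_sin_mul_cos_mul_ellipticDelta hk θ)
    ((((hΔ.const_mul _).sub (hΔ_inv.const_mul _)).sub hrest).intervalIntegrable _ _)
  simp only [sin_zero, cos_pi_div_two, mul_zero, zero_mul, sub_zero] at hFTC
  rw [intervalIntegral.integral_sub, intervalIntegral.integral_sub,
    intervalIntegral.integral_const_mul, intervalIntegral.integral_const_mul] at hFTC
  · exact sub_eq_zero.mp hFTC
  all_goals exact Continuous.intervalIntegrable (by fun_prop) _ _

theorem integral_sin_sq_mul_cos_sq_div_ellipticDelta_pos (hk₀ : k ≠ 0) (hk : k ^ 2 < 1) :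
    0 < ∫ θ in (0)..(π / 2), 3 * k ^ 4 * sin θ ^ 2 * cos θ ^ 2 / ellipticDelta k θ := by
  refine intervalIntegral.intervalIntegral_pos_of_pos_on
    (Continuous.intervalIntegrable ((by fun_prop : Continuous fun θ =>
      3 * k ^ 4 * sin θ ^ 2 * cos θ ^ 2).div_ellipticDelta hk) _ _) ?_ (by positivity)
  intro θ ⟨hθ₀, hθ₁⟩
  have hsin : 0 < sin θ := sin_pos_of_pos_of_lt_pi hθ₀ (by linarith [pi_pos])
  have hcos : 0 < cos θ := cos_pos_of_mem_Ioo ⟨by linarith [pi_pos], hθ₁⟩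
  have hΔ := ellipticDelta_pos hk θ
  positivity

end

/-- For every `κ ∈ (0,1)`, `(2-κ²)E(κ) - 2(1-κ²)K(κ) > 0`. -/
theorem elliptic_denominator_pos (κ : ℝ) (hκ : κ ∈ Set.Ioo (0:ℝ) 1) :
    (2 - κ^2) * ellipticE κ - 2*(1 - κ^2) * ellipticK κ > 0 := by
  obtain ⟨hκ₀, hκ₁⟩ := hκ
  have hκ_sq : κ ^ 2 < 1 := pow_lt_one₀ hκ₀.le hκ₁ two_ne_zero
  rw [ellipticE_mul_sub_ellipticK_mul_eq_integral hκ_sq]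
  exact integral_sin_sq_mul_cos_sq_div_ellipticDelta_pos hκ₀.ne' hκ_sq
end

section
/- For every κ ∈ (0,1), (2-κ²)E(κ)K(κ) - 2(1-κ²)K(κ)² > E(κ)² - (1-κ²)K(κ)², where K and E are the complete elliptic integrals of the first and second kind. Equivalently, ((2-κ²)EK - 2(1-κ²)K²)/(E² - (1-κ²)K²) > 1. -/
open Real

/-!
With `k' = 1 - κ²`, the difference of the two sides factors as `(K - E) (E - k' K)`.
Pointwise `1 / √(1 - κ² sin² θ) > √(1 - κ² sin² θ)`, so `K > E`. For `E > √k' K`, average the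
integrands at `θ` and `π/2 - θ`: with `a = √(1 - κ² sin² θ)`, `b = √(1 - κ² cos² θ)` one has
`(a b)² = k' + κ⁴ sin² θ cos² θ > k'`, hence `√k' (1/a + 1/b) = √k' (a + b) / (a b) < a + b`.
Since `k' ≤ √k'`, this gives `E > k' K` as well as `E² > k' K²`, the positivity of the
denominator.
-/

open MeasureTheory intervalIntegral Set

lemma integral_comp_sin_eq_integral_comp_cos (f : ℝ → ℝ) :
    ∫ θ in (0:ℝ)..π/2, f (sin θ) = ∫ θ in (0:ℝ)..π/2, f (cos θ) := by
  simpa [sin_pi_div_two_sub] using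
    (integral_comp_sub_left (fun θ => f (sin θ)) (a := 0) (b := π/2) (π/2)).symm

lemma one_sub_sq_mul_sq_pos {κ x : ℝ} (hκ : κ^2 < 1) (hx : x^2 ≤ 1) : 0 < 1 - κ^2 * x^2 := by
  nlinarith [sq_nonneg κ]

lemma continuous_one_div_sqrt_one_sub_sq_mul_sq {κ : ℝ} {f : ℝ → ℝ} (hκ : κ^2 < 1)
    (hf : Continuous f) (hf1 : ∀ θ, f θ ^ 2 ≤ 1) :
    Continuous fun θ => 1 / √(1 - κ^2 * f θ ^ 2) :=
  continuous_const.div (by fun_prop) fun θ => (sqrt_pos.2 (one_sub_sq_mul_sq_pos hκ (hf1 θ))).ne'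

lemma mul_one_div_add_one_div_lt_add {a b c : ℝ} (ha : 0 < a) (hb : 0 < b) (hc : c < a * b) :
    c * (1 / a + 1 / b) < a + b := by
  have hab : c * (1 / a + 1 / b) * (a * b) = c * (a + b) := by field_simp; ring
  nlinarith [mul_pos ha hb]

lemma sqrt_one_sub_sq_lt_sqrt_mul_sqrt {κ x y : ℝ} (hκ0 : κ ≠ 0) (hκ1 : κ^2 < 1)
    (hx : 0 < x) (hy : 0 < y) (hxy : x^2 + y^2 = 1) :
    √(1 - κ^2) < √(1 - κ^2 * x^2) * √(1 - κ^2 * y^2) := by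
  have hx1 : 0 < 1 - κ^2 * x^2 := one_sub_sq_mul_sq_pos hκ1 (by nlinarith)
  have hy1 : 0 < 1 - κ^2 * y^2 := one_sub_sq_mul_sq_pos hκ1 (by nlinarith)
  rw [sqrt_lt' (by positivity), mul_pow, sq_sqrt hx1.le, sq_sqrt hy1.le]
  have : 0 < κ^4 * x^2 * y^2 := by positivity
  linear_combination κ^2 * hxy + this

lemma ellipticK_nonneg (κ : ℝ) : 0 ≤ ellipticK κ :=
  integral_nonneg pi_div_two_pos.le fun _ _ => by positivity

lemma ellipticE_lt_ellipticK {κ : ℝ} (hκ0 : κ ≠ 0) (hκ1 : κ^2 < 1) :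
    ellipticE κ < ellipticK κ := by
  have ht : ∀ θ, 0 < 1 - κ^2 * sin θ ^ 2 := fun θ => one_sub_sq_mul_sq_pos hκ1 (sin_sq_le_one θ)
  refine integral_lt_integral_of_continuousOn_of_le_of_exists_lt pi_div_two_pos
    (by fun_prop) (continuous_one_div_sqrt_one_sub_sq_mul_sq hκ1 continuous_sin
      sin_sq_le_one).continuousOn (fun θ _ => ?_) ⟨π/2, right_mem_Icc.2 pi_div_two_pos.le, ?_⟩
  · rw [le_div_iff₀ (sqrt_pos.2 (ht θ)), mul_self_sqrt (ht θ).le]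
    nlinarith [sq_nonneg κ, sin_sq_le_one θ]
  · rw [lt_div_iff₀ (sqrt_pos.2 (ht _)), mul_self_sqrt (ht _).le, sin_pi_div_two]
    nlinarith [sq_pos_of_ne_zero hκ0]

lemma sqrt_one_sub_sq_mul_ellipticK_lt_ellipticE {κ : ℝ} (hκ0 : κ ≠ 0) (hκ1 : κ^2 < 1) :
    √(1 - κ^2) * ellipticK κ < ellipticE κ := by
  set a : ℝ → ℝ := fun θ => √(1 - κ^2 * sin θ ^ 2)
  set b : ℝ → ℝ := fun θ => √(1 - κ^2 * cos θ ^ 2)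
  have hEa : ellipticE κ = ∫ θ in (0:ℝ)..π/2, a θ := rfl
  have hKa : ellipticK κ = ∫ θ in (0:ℝ)..π/2, 1 / a θ := rfl
  have hEb : ellipticE κ = ∫ θ in (0:ℝ)..π/2, b θ :=
    integral_comp_sin_eq_integral_comp_cos fun x => √(1 - κ^2 * x ^ 2)
  have hKb : ellipticK κ = ∫ θ in (0:ℝ)..π/2, 1 / b θ :=
    integral_comp_sin_eq_integral_comp_cos fun x => 1 / √(1 - κ^2 * x ^ 2)
  have ha : IntervalIntegrable a volume 0 (π/2) := by
    apply Continuous.intervalIntegrable; fun_prop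
  have hb : IntervalIntegrable b volume 0 (π/2) := by
    apply Continuous.intervalIntegrable; fun_prop
  have ha' : IntervalIntegrable (fun θ => 1 / a θ) volume 0 (π/2) :=
    (continuous_one_div_sqrt_one_sub_sq_mul_sq hκ1 continuous_sin sin_sq_le_one).intervalIntegrable
      _ _
  have hb' : IntervalIntegrable (fun θ => 1 / b θ) volume 0 (π/2) :=
    (continuous_one_div_sqrt_one_sub_sq_mul_sq hκ1 continuous_cos cos_sq_le_one).intervalIntegrable
      _ _
  have hpos : 0 < ∫ θ in (0:ℝ)..π/2, (a θ + b θ - √(1 - κ^2) * (1 / a θ + 1 / b θ)) := by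
    refine intervalIntegral_pos_of_pos_on ((ha.add hb).sub ((ha'.add hb').const_mul _))
      (fun θ hθ => sub_pos.2 ?_) pi_div_two_pos
    have hs : 0 < sin θ := sin_pos_of_pos_of_lt_pi hθ.1 (by linarith [hθ.2, pi_pos])
    have hc : 0 < cos θ := cos_pos_of_mem_Ioo ⟨by linarith [hθ.1, pi_pos], hθ.2⟩
    exact mul_one_div_add_one_div_lt_add
      (sqrt_pos.2 (one_sub_sq_mul_sq_pos hκ1 (sin_sq_le_one θ)))
      (sqrt_pos.2 (one_sub_sq_mul_sq_pos hκ1 (cos_sq_le_one θ)))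
      (sqrt_one_sub_sq_lt_sqrt_mul_sqrt hκ0 hκ1 hs hc (sin_sq_add_cos_sq θ))
  rw [integral_sub (ha.add hb) ((ha'.add hb').const_mul _), integral_add ha hb,
    intervalIntegral.integral_const_mul, integral_add ha' hb', ← hEa, ← hEb, ← hKa, ← hKb]
    at hpos
  linarith

lemma one_sub_sq_mul_ellipticK_lt_ellipticE {κ : ℝ} (hκ0 : κ ≠ 0) (hκ1 : κ^2 < 1) :
    (1 - κ^2) * ellipticK κ < ellipticE κ := by
  have hle : 1 - κ^2 ≤ √(1 - κ^2) := by
    rw [le_sqrt (by linarith) (by linarith)]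
    nlinarith [sq_nonneg κ]
  calc (1 - κ^2) * ellipticK κ ≤ √(1 - κ^2) * ellipticK κ :=
        mul_le_mul_of_nonneg_right hle (ellipticK_nonneg κ)
    _ < ellipticE κ := sqrt_one_sub_sq_mul_ellipticK_lt_ellipticE hκ0 hκ1

lemma one_sub_sq_mul_ellipticK_sq_lt_ellipticE_sq {κ : ℝ} (hκ0 : κ ≠ 0) (hκ1 : κ^2 < 1) :
    (1 - κ^2) * ellipticK κ ^ 2 < ellipticE κ ^ 2 := by
  have h := sqrt_one_sub_sq_mul_ellipticK_lt_ellipticE hκ0 hκ1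
  have hK := mul_nonneg (sqrt_nonneg (1 - κ^2)) (ellipticK_nonneg κ)
  calc (1 - κ^2) * ellipticK κ ^ 2 = (√(1 - κ^2) * ellipticK κ) ^ 2 := by
        rw [mul_pow, sq_sqrt (by linarith)]
    _ < ellipticE κ ^ 2 := pow_lt_pow_left₀ h hK two_ne_zero

/-- For every `κ ∈ (0,1)`,
`(2-κ²)E(κ)K(κ) - 2(1-κ²)K(κ)² > E(κ)² - (1-κ²)K(κ)²`, equivalently the ratio
exceeds 1. -/
theorem elliptic_ratio_gt_one (κ : ℝ) (hκ : κ ∈ Set.Ioo (0:ℝ) 1) :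
    (2 - κ^2) * ellipticE κ * ellipticK κ - 2*(1 - κ^2) * (ellipticK κ)^2
      > (ellipticE κ)^2 - (1 - κ^2) * (ellipticK κ)^2 ∧
    ((2 - κ^2) * ellipticE κ * ellipticK κ - 2*(1 - κ^2) * (ellipticK κ)^2)
      / ((ellipticE κ)^2 - (1 - κ^2) * (ellipticK κ)^2) > 1 := by
  have hκ0 : κ ≠ 0 := hκ.1.ne'
  have hκ1 : κ^2 < 1 := by nlinarith [hκ.1, hκ.2]
  have hKE := sub_pos.2 (ellipticE_lt_ellipticK hκ0 hκ1)
  have hEK := sub_pos.2 (one_sub_sq_mul_ellipticK_lt_ellipticE hκ0 hκ1)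
  have hden := sub_pos.2 (one_sub_sq_mul_ellipticK_sq_lt_ellipticE_sq hκ0 hκ1)
  have hgt : (2 - κ^2) * ellipticE κ * ellipticK κ - 2*(1 - κ^2) * (ellipticK κ)^2
      > (ellipticE κ)^2 - (1 - κ^2) * (ellipticK κ)^2 := by
    linear_combination mul_pos hKE hEK
  exact ⟨hgt, (one_lt_div hden).2 hgt⟩
end
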